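/- Let X₁ = (1,0,0,0,0), X₂(x) = (0,1,x₁,x₁²,2x₁x₂), X₃(x) = (0,0,1,2x₁,2x₂), X₄ = (0,0,0,1,0), X₅ = (0,0,0,0,1) be vector fields on ℝ⁵, and let π₄₅ : ℝ⁵ → ℝ³ be the projection (x₁,…,x₅) ↦ (x₁,x₂,x₃). Define the vector fields on ℝ³ with coordinates (y₁,y₂,y₃): X₁⁴⁵ = (1,0,0), X₂⁴⁵(y) = (0,1,y₁), X₃⁴⁵ = (0,0,1). Then for every p ∈ ℝ⁵: (Dπ₄₅)(p)(Xᵢ(p)) = Xᵢ⁴⁵(π₄₅(p)) for i = 1,2,3, and (Dπ₄₅)(p)(X₄(p)) = (Dπ₄₅)(p)(X₅(p)) = 0; that is, the Vessiot–Guldberg Lie algebra of the control system projects under the multisymplectic reduction π₄₅ onto the Lie algebra ⟨X₁⁴⁵, X₂⁴⁵, X₃⁴⁵⟩. -/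

import Mathlib

/-- The vector fields X₁,…,X₅ of the control system on ℝ⁵ (indexed by `Fin 5`). -/
def ctrlX : Fin 5 → (Fin 5 → ℝ) → (Fin 5 → ℝ) :=
  ![fun _ => ![1, 0, 0, 0, 0],
    fun x => ![0, 1, x 0, (x 0) ^ 2, 2 * x 0 * x 1],
    fun x => ![0, 0, 1, 2 * x 0, 2 * x 1],
    fun _ => ![0, 0, 0, 1, 0],
    fun _ => ![0, 0, 0, 0, 1]]

/-- The projection π₄₅ : ℝ⁵ → ℝ³, (x₁,…,x₅) ↦ (x₁,x₂,x₃). -/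
def pi45 : (Fin 5 → ℝ) → (Fin 3 → ℝ) := fun x => ![x 0, x 1, x 2]

/-- The projected vector fields X₁⁴⁵, X₂⁴⁵, X₃⁴⁵ on ℝ³. -/
def ctrlX45 : Fin 3 → (Fin 3 → ℝ) → (Fin 3 → ℝ) :=
  ![fun _ => ![1, 0, 0],
    fun y => ![0, 1, y 0],
    fun _ => ![0, 0, 1]]

noncomputable def pi45L : (Fin 5 → ℝ) →L[ℝ] (Fin 3 → ℝ) :=
  .pi ![.proj 0, .proj 1, .proj 2]

theorem coe_pi45L : ⇑pi45L = pi45 := by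
  funext x i
  fin_cases i <;> rfl

theorem fderiv_pi45_apply (p v : Fin 5 → ℝ) : fderiv ℝ pi45 p v = pi45 v := by
  rw [← coe_pi45L, pi45L.fderiv]

/-- Under the reduction projection π₄₅, the first three control-system vector
fields are π₄₅-related to X₁⁴⁵, X₂⁴⁵, X₃⁴⁵ and the last two project to zero:
the Vessiot–Guldberg Lie algebra projects onto ⟨X₁⁴⁵, X₂⁴⁵, X₃⁴⁵⟩. -/
theorem control_system_projection :
    ∀ p : Fin 5 → ℝ,
      (∀ i : Fin 3, fderiv ℝ pi45 p (ctrlX (Fin.castLE (by omega) i) p)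
          = ctrlX45 i (pi45 p)) ∧
      fderiv ℝ pi45 p (ctrlX 3 p) = 0 ∧
      fderiv ℝ pi45 p (ctrlX 4 p) = 0 := by
  intro p
  simp only [fderiv_pi45_apply]
  refine ⟨fun i => ?_, ?_, ?_⟩ <;> funext j
  · fin_cases i <;> fin_cases j <;> rfl
  all_goals fin_cases j <;> rfl
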